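/- arXiv:math/0702793 — 4 statements merged into one kernel-verified Lean document; each statement's English description precedes it below -/
import Mathlib

section
/- If X is an injective object in the category of representations of a quiver Q by left R-modules, then for every vertex v, the canonical morphism X(v) → ∏_{a : s(a)=v} X(t(a)) induced by the maps X(a) is a split epimorphism of R-modules. -/
open CategoryTheory

/-- The canonical morphism `X(v) → ∏_{a : s(a) = v} X(t(a))` induced by the maps `X(a)`,
where the product runs over all arrows `a` of `Q` with source `v`. -/
noncomputable def canonicalSourceMap (Q : Type) [Quiver Q] (R : Type) [Ring R]
    (X : CategoryTheory.Paths Q ⥤ ModuleCat R) (v : Q) :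
    X.obj ((Paths.of Q).obj v) →ₗ[R] ((a : Σ w : Q, v ⟶ w) → X.obj ((Paths.of Q).obj a.1)) :=
  LinearMap.pi fun a => (X.map ((Paths.of Q).map a.2)).hom

/-!
Given modules `K u` at the vertices and linear maps `G e : K u → X t` along the arrows
`e : u ⟶ t`, the representation with `K u × X u` at `u` and arrow maps
`(k, x) ↦ (0, G e k + X e x)` contains `X` as a subrepresentation. If `X` is injective this
inclusion has a retraction `ψ`, and naturality of `ψ` along `e` gives `X e ∘ ψ_u(·, 0) = G e`.
Placing a module `M` at every vertex, with `G` read off from some `g : M → ∏_{s(a)=v} X(t(a))` on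
the arrows out of `v`, every such `g` therefore factors through the canonical map.

The product itself cannot serve as `M`, since it lives in a larger universe than the values of `X`.
Factoring maps out of `R` first shows that the canonical map is surjective, so the product is
isomorphic to a quotient of `X(v)`; factoring that isomorphism gives the section.
-/

universe w

namespace CategoryTheory.Paths

variable {Q : Type*} [Quiver Q] {R : Type*} [Ring R]

section TwistedProd

variable (X : Paths Q ⥤ ModuleCat.{w} R) (K : Q → ModuleCat.{w} R)
  (G : ∀ {u t : Q}, (u ⟶ t) → (K u →ₗ[R] X.obj ((of Q).obj t)))

noncomputable def twistedProd : Paths Q ⥤ ModuleCat.{w} R :=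
  lift
    { obj u := ModuleCat.of R (K u × X.obj ((of Q).obj u))
      map {_ t} e := ModuleCat.ofHom <|
        LinearMap.inr R (K t) (X.obj ((of Q).obj t)) ∘ₗ (G e).coprod (X.map ((of Q).map e)).hom }

noncomputable def twistedProdInr : X ⟶ twistedProd X K G :=
  liftNatTrans (fun u => ModuleCat.ofHom (LinearMap.inr R (K u) (X.obj ((of Q).obj u))))
    fun e => by
      ext x
      change ((0 : K _), _) = ((0 : K _), G e 0 + _)
      rw [map_zero, zero_add]
      rfl

instance : Mono (twistedProdInr X K G) :=
  have (u : Paths Q) : Mono ((twistedProdInr X K G).app u) :=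
    (ModuleCat.mono_iff_injective _).2 fun _ _ h => congrArg _root_.Prod.snd h
  NatTrans.mono_of_mono_app _

end TwistedProd

theorem exists_forall_map_comp_eq_of_injective (X : Paths Q ⥤ ModuleCat.{w} R) [Injective X]
    (K : Q → ModuleCat.{w} R) (G : ∀ {u t : Q}, (u ⟶ t) → (K u →ₗ[R] X.obj ((of Q).obj t))) :
    ∃ s : ∀ u, K u →ₗ[R] X.obj ((of Q).obj u),
      ∀ {u t : Q} (e : u ⟶ t), (X.map ((of Q).map e)).hom ∘ₗ s u = G e := by
  let ψ := Injective.factorThru (𝟙 X) (twistedProdInr X K G)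
  have hψ : twistedProdInr X K G ≫ ψ = 𝟙 X := Injective.comp_factorThru _ _
  refine ⟨fun u => (ψ.app u).hom ∘ₗ LinearMap.inl R (K u) _, fun {u t} e => ?_⟩
  ext k
  have hnat := ConcreteCategory.congr_hom (ψ.naturality ((of Q).map e)) (k, 0)
  have hret := ConcreteCategory.congr_hom (congr_app hψ ((of Q).obj t)) (G e k)
  change ψ.app _ ((0 : K t), G e k + X.map _ 0) = _ at hnat
  rw [map_zero, add_zero] at hnat
  exact hnat.symm.trans hret

end CategoryTheory.Paths

section CanonicalSourceMap

variable {Q : Type} [Quiver Q] {R : Type} [Ring R] (X : Paths Q ⥤ ModuleCat.{w} R) [Injective X]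
  (v : Q)

theorem exists_canonicalSourceMap_comp_eq {M : Type w} [AddCommGroup M] [Module R M]
    (g : M →ₗ[R] ((a : Σ t : Q, v ⟶ t) → X.obj ((Paths.of Q).obj a.1))) :
    ∃ s : M →ₗ[R] X.obj ((Paths.of Q).obj v), canonicalSourceMap Q R X v ∘ₗ s = g := by
  classical
  let g' : ∀ u, M →ₗ[R] ((a : Σ t : Q, u ⟶ t) → X.obj ((Paths.of Q).obj a.1)) :=
    Function.update 0 v g
  obtain ⟨s, hs⟩ := Paths.exists_forall_map_comp_eq_of_injective X (fun _ => ModuleCat.of R M)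
    fun {u t} e => LinearMap.proj (⟨t, e⟩ : Σ t : Q, u ⟶ t) ∘ₗ g' u
  refine ⟨s v, ?_⟩
  ext m ⟨t, e⟩
  simpa [canonicalSourceMap, g'] using LinearMap.congr_fun (hs e) m

theorem canonicalSourceMap_surjective : Function.Surjective (canonicalSourceMap Q R X v) := by
  intro m
  obtain ⟨s, hs⟩ := exists_canonicalSourceMap_comp_eq X v
    (LinearMap.toSpanSingleton R _ m ∘ₗ (ULift.moduleEquiv (R := R) (M := R)).toLinearMap)
  exact ⟨s (ULift.up 1), by simpa using LinearMap.congr_fun hs (ULift.up 1)⟩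

end CanonicalSourceMap

/-- If `X` is an injective object of the category of representations of a quiver
`Q` by left `R`-modules, then for every vertex `v` the canonical morphism
`X(v) → ∏_{s(a)=v} X(t(a))` is a split epimorphism of `R`-modules. -/
theorem canonicalSourceMap_split_epi_of_injective
    (Q : Type) [Quiver Q] (R : Type) [Ring R]
    (X : Paths Q ⥤ ModuleCat R) (hX : CategoryTheory.Injective X) (v : Q) :
    ∃ s : ((a : Σ w : Q, v ⟶ w) → X.obj ((Paths.of Q).obj a.1)) →ₗ[R] X.obj ((Paths.of Q).obj v),
      (canonicalSourceMap Q R X v) ∘ₗ s = LinearMap.id := by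
  have := hX
  let e := (canonicalSourceMap Q R X v).quotKerEquivOfSurjective
    (canonicalSourceMap_surjective X v)
  obtain ⟨s, hs⟩ := exists_canonicalSourceMap_comp_eq X v e.toLinearMap
  exact ⟨s ∘ₗ e.symm.toLinearMap, by rw [← LinearMap.comp_assoc, hs, e.comp_symm]⟩
end

section
/- Let T be a tree quiver, v a vertex, and E an indecomposable injective left R-module. Then the representation e_*^v(E), which assigns E to every vertex w admitting a (necessarily unique) path from w to v with identity structure maps along that path and 0 elsewhere, is an indecomposable injective object of (T, R-Mod). -/
open CategoryTheory CategoryTheory.Limits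

/-- The representation `e_*^v(E)` of a quiver `Q` (right adjoint of evaluation at `v`):
to a vertex `w` it assigns the product of copies of `E` indexed by the paths from `w` to `v`,
with structure maps given by precomposition of paths.  On a tree `T` this is exactly the
representation assigning `E` (with identity structure maps) to every vertex `w` admitting a
(necessarily unique) path from `w` to `v`, and `0` elsewhere, since path sets in a tree have
at most one element. -/
@[simps] noncomputable def eStar (Q : Type) [Quiver Q] (R : Type) [Ring R] (v : Q)
    (E : Type) [AddCommGroup E] [Module R E] :
    Paths Q ⥤ ModuleCat R where
  obj w := ModuleCat.of R ((w ⟶ (Paths.of Q).obj v) → E)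
  map {w w'} p := ModuleCat.ofHom (LinearMap.funLeft R E (fun q : w' ⟶ (Paths.of Q).obj v => p ≫ q))
  map_id w := by
    ext x
    simp only [Category.id_comp]
    rfl
  map_comp {w w' w''} p p' := by
    ext x
    exact congrArg x (Category.assoc p p' _)

/-- An object of an additive category is indecomposable if it is nonzero and its only
idempotent endomorphisms are `0` and the identity. -/
def IndecomposableObj {C : Type*} [Category C] [Preadditive C] (X : C) : Prop :=
  ¬ IsZero X ∧ ∀ e : X ⟶ X, e ≫ e = e → e = 0 ∨ e = 𝟙 X

/-- An `R`-module is indecomposable if it is nonzero and its only idempotent endomorphisms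
are `0` and the identity. -/
def IndecomposableModule (R : Type) [Ring R] (E : Type) [AddCommGroup E] [Module R E] : Prop :=
  Nontrivial E ∧ ∀ e : E →ₗ[R] E, e ∘ₗ e = e → e = 0 ∨ e = LinearMap.id

/-!
Morphisms `F ⟶ e_*^v(E)` correspond to linear maps `F(v) → E` (the adjunction), so `e_*^v(E)` is
injective as soon as `E` is, evaluation at `v` preserving monomorphisms. In a tree the only path
from `v` to `v` is the trivial one, so `e_*^v(E)(v) = E` and the adjunction identifies the
endomorphisms of `e_*^v(E)` with those of `E`, compatibly with composition; idempotents of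
`e_*^v(E)` therefore come from idempotents of `E`.
-/

theorem Quiver.subsingleton_path_of_exists_unique_path_from
    {T : Type} [Quiver T] {r : T}
    (htree : ∀ w : T, ∃! _p : ((Paths.of T).obj r ⟶ (Paths.of T).obj w), True)
    (w w' : Paths T) : Subsingleton (w ⟶ w') := by
  refine ⟨fun p q => ?_⟩
  obtain ⟨a, -⟩ := htree w
  obtain ⟨b, -, hb⟩ := htree w'
  exact Quiver.Path.comp_injective_right a
    ((hb (a ≫ p) trivial).trans (hb (a ≫ q) trivial).symm)

namespace EStar

variable {Q : Type} [Quiver Q] {R : Type} [Ring R] {v : Q}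
  {E : Type} [AddCommGroup E] [Module R E] {E' : Type} [AddCommGroup E'] [Module R E']
  {F G : Paths Q ⥤ ModuleCat R}

noncomputable def lift (φ : F.obj ((Paths.of Q).obj v) →ₗ[R] E) : F ⟶ eStar Q R v E where
  app w := ModuleCat.ofHom (LinearMap.pi fun q => φ ∘ₗ (F.map q).hom)
  naturality w w' p := by
    ext x
    funext q
    show φ (F.map q (F.map p x)) = φ (F.map (p ≫ q) x)
    rw [F.map_comp]
    rfl

noncomputable def eval (η : F ⟶ eStar Q R v E) : F.obj ((Paths.of Q).obj v) →ₗ[R] E :=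
  LinearMap.proj (𝟙 ((Paths.of Q).obj v)) ∘ₗ (η.app _).hom

theorem lift_eval (η : F ⟶ eStar Q R v E) : lift (eval η) = η := by
  ext w x
  funext q
  show η.app _ (F.map q x) (𝟙 _) = η.app w x q
  have := congrArg (fun m => m x (𝟙 ((Paths.of Q).obj v))) (η.naturality q)
  exact this.trans (congrArg (η.app w x) (Category.comp_id q))

theorem comp_lift (f : F ⟶ G) (φ : G.obj ((Paths.of Q).obj v) →ₗ[R] E) :
    f ≫ lift φ = lift (φ ∘ₗ (f.app _).hom) := by
  ext w x
  funext q
  show φ (G.map q (f.app w x)) = φ (f.app _ (F.map q x))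
  rw [← ModuleCat.comp_apply, ← f.naturality, ModuleCat.comp_apply]

theorem injective [Module.Injective R E] : Injective (eStar Q R v E) where
  factors g f _ := by
    obtain ⟨h, hh⟩ := Module.Injective.extension_property R E _ _ (f.app _).hom
      ((ModuleCat.mono_iff_injective _).mp inferInstance) (eval g)
    exact ⟨lift h, by rw [comp_lift, hh, lift_eval]⟩

noncomputable def map (φ : E →ₗ[R] E') : eStar Q R v E ⟶ eStar Q R v E' where
  app w := ModuleCat.ofHom (φ.compLeft _)

theorem map_id : map (Q := Q) (v := v) (LinearMap.id : E →ₗ[R] E) = 𝟙 _ :=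
  rfl

theorem map_zero : map (Q := Q) (v := v) (0 : E →ₗ[R] E') = 0 :=
  rfl

theorem map_comp {E'' : Type} [AddCommGroup E''] [Module R E''] (φ : E →ₗ[R] E')
    (ψ : E' →ₗ[R] E'') : map (Q := Q) (v := v) (ψ ∘ₗ φ) = map φ ≫ map ψ :=
  rfl

theorem map_injective : Function.Injective (map (Q := Q) (v := v) : (E →ₗ[R] E') → _) := by
  intro φ ψ h
  ext e
  exact congrArg (fun η : eStar Q R v E ⟶ eStar Q R v E' => η.app _ (fun _ => e) (𝟙 _)) h

theorem eq_map_of_subsingleton [Subsingleton ((Paths.of Q).obj v ⟶ (Paths.of Q).obj v)]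
    (η : eStar Q R v E ⟶ eStar Q R v E') :
    η = map (eval η ∘ₗ LinearMap.pi fun _ => LinearMap.id) := by
  conv_lhs => rw [← lift_eval η]
  ext w x
  funext q
  show eval η (fun p => x (q ≫ p)) = eval η (fun _ => x q)
  congr
  funext p
  rw [Subsingleton.elim p (𝟙 _), Category.comp_id]

theorem indecomposableObj [Subsingleton ((Paths.of Q).obj v ⟶ (Paths.of Q).obj v)]
    (hE : IndecomposableModule R E) : IndecomposableObj (eStar Q R v E) := by
  obtain ⟨hnontriv, hidem⟩ := hE
  refine ⟨fun hzero => ?_, fun η hη => ?_⟩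
  · have hid : (LinearMap.id : E →ₗ[R] E) = 0 :=
      map_injective (Q := Q) (v := v) (hzero.eq_of_src _ _)
    obtain ⟨e, he⟩ := exists_ne (0 : E)
    exact he (LinearMap.congr_fun hid e)
  · set ε : E →ₗ[R] E := eval η ∘ₗ LinearMap.pi fun _ => LinearMap.id
    have hηε : η = map ε := eq_map_of_subsingleton η
    have hε : ε ∘ₗ ε = ε := map_injective (Q := Q) (v := v) (by rw [map_comp, ← hηε, hη])
    rcases hidem ε hε with h | h
    · exact Or.inl (by rw [hηε, h, map_zero])
    · exact Or.inr (by rw [hηε, h, map_id])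

end EStar

/-- Let `T` be a tree quiver (there is a root `r` such that every vertex admits
a unique path from `r`), `v` a vertex, and `E` an indecomposable injective left `R`-module.
Then `e_*^v(E)` is an indecomposable injective object of `(T, R-Mod)`. -/
theorem eStar_indecomposable_injective
    (T : Type) [Quiver T] (r : T)
    (htree : ∀ w : T, ∃! _p : ((Paths.of T).obj r ⟶ (Paths.of T).obj w), True)
    (R : Type) [Ring R] (v : T) (E : Type) [AddCommGroup E] [Module R E]
    (hEinj : Module.Injective R E) (hEind : IndecomposableModule R E) :
    CategoryTheory.Injective (eStar T R v E) ∧ IndecomposableObj (eStar T R v E) := by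
  have := Quiver.subsingleton_path_of_exists_unique_path_from htree
    ((Paths.of T).obj v) ((Paths.of T).obj v)
  exact ⟨EStar.injective, EStar.indecomposableObj hEind⟩
end

section
/- Let p = ··· a₃ a₂ a₁ be an infinite path in a tree T starting at the root, with associated vertex at infinity w. For any injective left R-module E, the representation e_*^w(E) of T, which assigns E to each vertex lying on p with identity maps along the arrows a_i, and 0 to all other vertices, is an injective object of (T, R-Mod). -/
/-!
Restricted to the ray `vtx 0 ⟶ vtx 1 ⟶ ⋯`, the representation `X` becomes a functor `ℕ ⥤ R-Mod`
isomorphic to the constant functor at `E`; that functor is injective because it is the right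
adjoint of `colim`, which preserves monomorphisms in `R-Mod` (AB5). Since `T` is a tree, the
vertices of the ray are pairwise distinct and the only arrows into them are the ray's own arrows;
as `X` vanishes off the ray, morphisms `Z ⟶ X` correspond bijectively to morphisms between the
restrictions to the ray, and injectivity transfers back to `X`.
-/

open CategoryTheory CategoryTheory.Limits

namespace Quiver.Path

variable {V : Type*} [Quiver V] {vtx : ℕ → V}

def ofSequence (arr : ∀ n, vtx n ⟶ vtx (n + 1)) : ∀ n, Path (vtx 0) (vtx n)
  | 0 => nil
  | n + 1 => (ofSequence arr n).cons (arr n)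

@[simp]
lemma length_ofSequence (arr : ∀ n, vtx n ⟶ vtx (n + 1)) (n : ℕ) :
    (ofSequence arr n).length = n := by
  induction n with
  | zero => rfl
  | succ n ih => simp [ofSequence, ih]

lemma injective_of_forall_subsingleton (arr : ∀ n, vtx n ⟶ vtx (n + 1))
    (huniq : ∀ w, Subsingleton (Path (vtx 0) w)) : Function.Injective vtx := by
  intro m n hmn
  have length_eq : ∀ w (_ : vtx m = w) (p : Path (vtx 0) w), p.length = m := by
    rintro w rfl p
    rw [Subsingleton.elim p (ofSequence arr m), length_ofSequence]
  simpa using (length_eq _ hmn (ofSequence arr n)).symm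

lemma exists_eq_arr_of_forall_subsingleton (arr : ∀ n, vtx n ⟶ vtx (n + 1))
    (huniq : ∀ w, Subsingleton (Path (vtx 0) w)) {u : V} (p : Path (vtx 0) u) {m : ℕ}
    (a : u ⟶ vtx m) : ∃ k, ∃ _ : m = k + 1, ∃ _ : u = vtx k, a ≍ arr k := by
  have hcons : p.cons a = ofSequence arr m := Subsingleton.elim _ _
  cases m with
  | zero => simpa using congrArg length hcons
  | succ k =>
    obtain ⟨hu, -, ha⟩ := cons.inj hcons
    exact ⟨k, rfl, hu, ha⟩

end Quiver.Path

theorem CategoryTheory.Functor.injective_of_bijective_map {A B : Type*} [Category* A]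
    [Category* B] (F : A ⥤ B) [F.PreservesMonomorphisms] {I : A} (hI : Injective (F.obj I))
    (hF : ∀ Z : A, Function.Bijective (F.map : (Z ⟶ I) → (F.obj Z ⟶ F.obj I))) :
    Injective I where
  factors g f _ := by
    obtain ⟨h, fac⟩ := hI.factors (F.map g) (F.map f)
    obtain ⟨φ, rfl⟩ := (hF _).2 h
    exact ⟨φ, (hF _).1 (by simp [fac])⟩

def CategoryTheory.Functor.isoConstOfSequence {C : Type*} [Category* C] {F : ℕ ⥤ C} {E : C}
    (e : ∀ n, F.obj n ≅ E)
    (he : ∀ n, F.map (homOfLE (n.le_add_right 1)) ≫ (e (n + 1)).hom = (e n).hom) :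
    F ≅ (Functor.const ℕ).obj E :=
  NatIso.ofComponents e fun f =>
    (NatTrans.ofSequence (G := (Functor.const ℕ).obj E) (fun n => (e n).hom)
      (fun n => by simp [he])).naturality f

namespace CategoryTheory.Paths

variable {T : Type*} [Quiver T] {vtx : ℕ → T} (arr : ∀ n, vtx n ⟶ vtx (n + 1))
  {C : Type*} [Category* C] [HasZeroMorphisms C]

abbrev ofSequence : ℕ ⥤ Paths T := Functor.ofSequence fun n => (Paths.of T).map (arr n)

variable {arr} {Z X : Paths T ⥤ C}

open Classical in
noncomputable def extendApp (h : ofSequence arr ⋙ Z ⟶ ofSequence arr ⋙ X) (u : T) :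
    Z.obj u ⟶ X.obj u :=
  if hu : ∃ n, vtx n = u then
    eqToHom (congrArg Z.obj hu.choose_spec.symm) ≫ h.app hu.choose ≫
      eqToHom (congrArg X.obj hu.choose_spec)
  else 0

lemma extendApp_vtx (hinj : Function.Injective vtx)
    (h : ofSequence arr ⋙ Z ⟶ ofSequence arr ⋙ X) (n : ℕ) :
    extendApp h (vtx n) = h.app n := by
  suffices ∀ k (hk : vtx k = vtx n), eqToHom (congrArg Z.obj hk.symm) ≫ h.app k ≫
      eqToHom (congrArg X.obj hk) = h.app n from
    (dif_pos _).trans (this _ (⟨n, rfl⟩ : ∃ m, vtx m = vtx n).choose_spec)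
  rintro k hk
  obtain rfl := hinj hk
  exact (Category.id_comp _).trans (Category.comp_id _)

lemma extendApp_naturality (hinj : Function.Injective vtx)
    (harr : ∀ {u : T} {m : ℕ} (a : u ⟶ vtx m), ∃ k, ∃ _ : m = k + 1, ∃ _ : u = vtx k, a ≍ arr k)
    (hX : ∀ u : T, (∀ n, u ≠ vtx n) → IsZero (X.obj u))
    (h : ofSequence arr ⋙ Z ⟶ ofSequence arr ⋙ X) {b c : T} (a : b ⟶ c) :
    Z.map a.toPath ≫ extendApp h c = extendApp h b ≫ X.map a.toPath := by
  by_cases hc : ∃ m, c = vtx m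
  · obtain ⟨m, rfl⟩ := hc
    obtain ⟨k, rfl, rfl, ha⟩ := harr a
    obtain rfl := eq_of_heq ha
    rw [extendApp_vtx hinj, extendApp_vtx hinj]
    have hsucc := h.naturality (homOfLE (k.le_add_right 1))
    simp only [Functor.comp_map, Functor.ofSequence_map_homOfLE_succ] at hsucc
    exact hsucc
  · exact (hX c fun n hn => hc ⟨n, hn⟩).eq_of_tgt _ _

theorem bijective_whiskerLeft_ofSequence (hinj : Function.Injective vtx)
    (harr : ∀ {u : T} {m : ℕ} (a : u ⟶ vtx m), ∃ k, ∃ _ : m = k + 1, ∃ _ : u = vtx k, a ≍ arr k)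
    (hX : ∀ u : T, (∀ n, u ≠ vtx n) → IsZero (X.obj u)) (Z : Paths T ⥤ C) :
    Function.Bijective (Functor.whiskerLeft (ofSequence arr) : (Z ⟶ X) → _) := by
  refine ⟨fun φ ψ hφψ => ?_, fun h => ?_⟩
  · ext u
    by_cases hu : ∃ n, u = vtx n
    · obtain ⟨n, rfl⟩ := hu
      exact congrArg (fun θ => θ.app n) hφψ
    · exact (hX u fun n hn => hu ⟨n, hn⟩).eq_of_tgt _ _
  · refine ⟨liftNatTrans (extendApp h) (extendApp_naturality hinj harr hX h), ?_⟩
    ext n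
    exact extendApp_vtx hinj h n

end CategoryTheory.Paths

/-- Let `T` be a tree with root `r` (every vertex admits a unique path from `r`),
and let `p = ⋯ a₃ a₂ a₁` be an infinite path starting at the root, given by vertices
`vtx 0 = r, vtx 1, vtx 2, …` and arrows `arr n : vtx n ⟶ vtx (n+1)`, with associated vertex at
infinity `w`.  For an injective left `R`-module `E`, the representation `e_*^w(E)` of `T` —
the one assigning `E` to each vertex lying on `p`, with identity maps along the arrows `aᵢ`,
and `0` to all other vertices — is an injective object of `(T, R-Mod)`.  (The representation
is encoded as a functor `X` equipped with compatible isomorphisms `X(vtx n) ≅ E` carrying the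
structure maps along the arrows of `p` to the identity of `E`, and whose value at every vertex
not on `p` is zero.) -/
theorem eStar_at_infinity_injective
    (T : Type) [Quiver T] (r : T)
    (htree : ∀ w : T, ∃! _p : ((Paths.of T).obj r ⟶ (Paths.of T).obj w), True)
    (R : Type) [Ring R] (E : Type) [AddCommGroup E] [Module R E]
    (hEinj : Module.Injective R E)
    (vtx : ℕ → T) (hv0 : vtx 0 = r) (arr : ∀ n : ℕ, vtx n ⟶ vtx (n + 1))
    (X : Paths T ⥤ ModuleCat R)
    (iso : ∀ n : ℕ, X.obj ((Paths.of T).obj (vtx n)) ≅ ModuleCat.of R E)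
    (hiso : ∀ n : ℕ, X.map ((Paths.of T).map (arr n)) ≫ (iso (n + 1)).hom = (iso n).hom)
    (hzero : ∀ u : T, (∀ n : ℕ, u ≠ vtx n) → IsZero (X.obj ((Paths.of T).obj u))) :
    CategoryTheory.Injective X := by
  subst hv0
  have huniq (w : T) : Subsingleton (Quiver.Path (vtx 0) w) :=
    ⟨fun p q => (htree w).unique trivial trivial⟩
  have hinj := Quiver.Path.injective_of_forall_subsingleton arr huniq
  have harr {u : T} {m : ℕ} (a : u ⟶ vtx m) :
      ∃ k, ∃ _ : m = k + 1, ∃ _ : u = vtx k, a ≍ arr k :=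
    Quiver.Path.exists_eq_arr_of_forall_subsingleton arr huniq (htree u).exists.choose a
  have : Injective (ModuleCat.of R E) := Module.injective_object_of_injective_module (inj := hEinj)
  have hrestr : Injective (Paths.ofSequence arr ⋙ X) :=
    .of_iso (Functor.isoConstOfSequence iso fun n => by
      erw [Functor.comp_map, Functor.ofSequence_map_homOfLE_succ]; exact hiso n).symm
      (Injective.injective_of_adjoint colimConstAdj _)
  exact ((Functor.whiskeringLeft _ _ _).obj (Paths.ofSequence arr)).injective_of_bijective_map
    hrestr (Paths.bijective_whiskerLeft_ofSequence hinj harr hzero)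
end

section
/- Let (N_i)_{i≥0} be a family of injective left R-modules and set U_n = ∏_{i≥n} N_i with the projection maps U_n → U_{n+1}. Then the representation U = (U₀ → U₁ → U₂ → ···) is an injective object of (A_∞⁺, R-Mod); moreover every representation M embeds in such a U (choosing embeddings M_n → N_n into injectives), so every injective representation of A_∞⁺ is a direct summand of such a U. -/
/-!
A morphism `X ⟶ U` is the same as a family of linear maps `σ_n : X_n → N_n`: the component
`X_n → N_m` (`m ≥ n`) is `σ_m` after the transition map `X_n → X_m`, which is well defined because
`A_∞⁺` has exactly one path `n → m`. Under this correspondence an extension problem for `U` splits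
into extension problems for the `N_n`, so `U` is injective when every `N_n` is. Embedding each
`X_n` into an injective module gives a mono `X ⟶ U`, and it splits when `X` is injective.
-/

open CategoryTheory

/-- The quiver `A_∞⁺ = • → • → • → ⋯`. -/
abbrev AInfPlus : Type := ℕ

instance : Quiver AInfPlus := ⟨fun m n => PLift (m + 1 = n)⟩

/-- The representation `U = (U₀ → U₁ → ⋯)` of `A_∞⁺` with `U_n = ∏_{i ≥ n} N_i` and with the
projection maps `U_n → U_{n+1}` as structure maps. -/
noncomputable def URep (R : Type) [Ring R] (N : ℕ → ModuleCat R) :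
    Paths AInfPlus ⥤ ModuleCat R :=
  Paths.lift
    { obj := fun n => ModuleCat.of R ((i : {i : ℕ // n ≤ i}) → N i.1)
      map := fun {m n} a =>
        ModuleCat.ofHom (LinearMap.pi fun i : {i : ℕ // n ≤ i} =>
          LinearMap.proj (⟨i.1, (Nat.le_succ m).trans (le_of_eq_of_le a.down i.2)⟩ : {i : ℕ // m ≤ i})) }

namespace AInfPlus

lemma le_of_path {m n : AInfPlus} (p : Quiver.Path m n) : m ≤ n := by
  induction p with
  | nil => exact le_rfl
  | cons _ e ih => exact ih.trans (Nat.le.intro e.down)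

lemma path_eq {m n : AInfPlus} (p q : Quiver.Path m n) : p = q := by
  induction p with
  | nil =>
    cases q with
    | nil => rfl
    | cons q e => exact absurd (e.down ▸ le_of_path q) (Nat.not_succ_le_self _)
  | cons p e ih =>
    cases q with
    | nil => exact absurd (e.down ▸ le_of_path p) (Nat.not_succ_le_self _)
    | cons q e' =>
      obtain rfl := Nat.succ_injective (e'.down.trans e.down.symm)
      obtain ⟨⟩ := e
      obtain ⟨⟩ := e'
      rw [ih q]

instance (m n : Paths AInfPlus) : Subsingleton (m ⟶ n) := ⟨path_eq⟩

def pathOfLE {m n : ℕ} (h : m ≤ n) : (Paths.of AInfPlus).obj m ⟶ (Paths.of AInfPlus).obj n :=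
  Nat.leRecOn h (fun p => p.cons ⟨rfl⟩) Quiver.Path.nil

lemma map_comp_map_pathOfLE {C : Type*} [Category C] (F : Paths AInfPlus ⥤ C) {l m n : ℕ}
    (f : (Paths.of AInfPlus).obj l ⟶ (Paths.of AInfPlus).obj m) (h : m ≤ n) :
    F.map f ≫ F.map (pathOfLE h) = F.map (pathOfLE ((le_of_path f).trans h)) := by
  rw [← F.map_comp]
  exact congrArg F.map (Subsingleton.elim _ _)

end AInfPlus

namespace URep

open AInfPlus

variable {R : Type} [Ring R] (N : ℕ → ModuleCat R)

lemma map_apply {m n : AInfPlus} (p : Quiver.Path m n) (x : (URep R N).obj m)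
    (j : {i : ℕ // n ≤ i}) :
    (URep R N).map p x j = x ⟨j.1, (le_of_path p).trans j.2⟩ := by
  induction p with
  | nil => rfl
  | cons q e ih => exact ih ⟨j.1, (Nat.le.intro e.down).trans j.2⟩

variable (X : Paths AInfPlus ⥤ ModuleCat R)

noncomputable def toComponents (t : X ⟶ URep R N) (n : ℕ) :
    X.obj ((Paths.of AInfPlus).obj n) →ₗ[R] N n :=
  (LinearMap.proj (⟨n, le_refl n⟩ : {i : ℕ // n ≤ i})).comp (t.app _).hom

noncomputable def ofComponentsApp (σ : ∀ n : ℕ, X.obj ((Paths.of AInfPlus).obj n) →ₗ[R] N n)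
    (n : ℕ) : X.obj ((Paths.of AInfPlus).obj n) ⟶ (URep R N).obj ((Paths.of AInfPlus).obj n) :=
  ModuleCat.ofHom <| LinearMap.pi fun j : {i : ℕ // n ≤ i} =>
    (σ j.1).comp (X.map (pathOfLE j.2)).hom

lemma ofComponentsApp_naturality (σ : ∀ n : ℕ, X.obj ((Paths.of AInfPlus).obj n) →ₗ[R] N n)
    {m n : ℕ} (f : (Paths.of AInfPlus).obj m ⟶ (Paths.of AInfPlus).obj n) :
    X.map f ≫ ofComponentsApp N X σ n = ofComponentsApp N X σ m ≫ (URep R N).map f := by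
  ext x
  funext j
  exact (congrArg (σ j.1) (ConcreteCategory.congr_hom (map_comp_map_pathOfLE X f j.2) x)).trans
    (map_apply N f (ofComponentsApp N X σ m x) j).symm

noncomputable def ofComponents (σ : ∀ n : ℕ, X.obj ((Paths.of AInfPlus).obj n) →ₗ[R] N n) :
    X ⟶ URep R N where
  app n := ofComponentsApp N X σ n
  naturality _ _ f := ofComponentsApp_naturality N X σ f

lemma toComponents_ofComponents (σ : ∀ n : ℕ, X.obj ((Paths.of AInfPlus).obj n) →ₗ[R] N n) :
    toComponents N X (ofComponents N X σ) = σ := by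
  ext n x
  change σ n (X.map (pathOfLE (le_refl n)) x) = σ n x
  rw [Subsingleton.elim (pathOfLE (le_refl n)) (𝟙 _), X.map_id]
  rfl

/-- By naturality, a morphism into `URep R N` is determined by its diagonal components. -/
lemma app_apply (t : X ⟶ URep R N) {n : ℕ} (x : X.obj ((Paths.of AInfPlus).obj n))
    (j : {i : ℕ // n ≤ i}) :
    t.app _ x j = toComponents N X t j.1 (X.map (pathOfLE j.2) x) := by
  change _ = t.app _ (X.map (pathOfLE j.2) x) ⟨j.1, le_rfl⟩
  rw [NatTrans.naturality_apply]
  exact (map_apply N (pathOfLE j.2) (t.app _ x) ⟨j.1, le_rfl⟩).symm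

lemma ofComponents_toComponents (t : X ⟶ URep R N) :
    ofComponents N X (toComponents N X t) = t := by
  ext n : 2
  exact ModuleCat.hom_ext (LinearMap.ext fun x => funext fun j => (app_apply N X t x j).symm)

noncomputable def homEquiv :
    (X ⟶ URep R N) ≃ ∀ n : ℕ, X.obj ((Paths.of AInfPlus).obj n) →ₗ[R] N n where
  toFun := toComponents N X
  invFun := ofComponents N X
  left_inv := ofComponents_toComponents N X
  right_inv := toComponents_ofComponents N X

lemma toComponents_comp {Y : Paths AInfPlus ⥤ ModuleCat R} (f : Y ⟶ X) (t : X ⟶ URep R N)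
    (n : ℕ) : toComponents N Y (f ≫ t) n = (toComponents N X t n).comp (f.app _).hom :=
  rfl

lemma mono_ofComponents (σ : ∀ n : ℕ, X.obj ((Paths.of AInfPlus).obj n) →ₗ[R] N n)
    (hσ : ∀ n, Function.Injective (σ n)) : Mono (ofComponents N X σ) := by
  refine (NatTrans.mono_iff_mono_app _).mpr fun n => (ModuleCat.mono_iff_injective _).mpr ?_
  have hinj : Function.Injective (toComponents N X (ofComponents N X σ) n) := by
    rw [toComponents_ofComponents]
    exact hσ n
  exact fun x y hxy => hinj (congrFun hxy ⟨n, le_rfl⟩)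

/-- Through `homEquiv`, extending `A ⟶ URep R N` along a mono `A ⟶ B` amounts to extending each
`σ_n : A_n → N_n` along the injective map `A_n → B_n`. -/
theorem injective (hN : ∀ i, Module.Injective R (N i)) : Injective (URep R N) where
  factors {A B} g f _ := by
    have hf : ∀ n, Function.Injective (f.app n) := fun n =>
      (ModuleCat.mono_iff_injective _).mp inferInstance
    choose τ hτ using fun n => (hN n).out (f.app _).hom (hf _) (toComponents N A g n)
    refine ⟨ofComponents N B τ, (homEquiv N A).injective (funext fun n => ?_)⟩
    change toComponents N A (f ≫ _) n = _
    rw [toComponents_comp, toComponents_ofComponents]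
    exact LinearMap.ext (hτ n)

theorem exists_mono (X : Paths AInfPlus ⥤ ModuleCat R) :
    ∃ N : ℕ → ModuleCat R, (∀ i, Module.Injective R (N i)) ∧ ∃ φ : X ⟶ URep R N, Mono φ :=
  ⟨fun n => Injective.under (X.obj ((Paths.of AInfPlus).obj n)),
    fun _ => Module.injective_module_of_injective_object R _ (inj := Injective.injective_under _),
    ofComponents _ X (fun n => (Injective.ι (X.obj ((Paths.of AInfPlus).obj n))).hom),
    mono_ofComponents _ X _ fun _ => (ModuleCat.mono_iff_injective _).mp inferInstance⟩

end URep

/-- Let `(N_i)_{i≥0}` be a family of injective left `R`-modules and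
`U = (∏_{i≥0} N_i → ∏_{i≥1} N_i → ⋯)` the corresponding representation of `A_∞⁺` with the
projection maps.  Then: (a) morphisms `M ⟶ U` correspond bijectively to families of linear
maps `σ_n : M_n → N_n`; (b) `U` is an injective object of `(A_∞⁺, R-Mod)`; (c) every
representation `M` with chosen embeddings `M_n ↪ N_n` into injectives embeds into `U`;
consequently (d) every injective representation of `A_∞⁺` is a direct summand of such a
representation `U`. -/
theorem URep_injective_and_embedding (R : Type) [Ring R] :
    (∀ (N : ℕ → ModuleCat R) (X : Paths AInfPlus ⥤ ModuleCat R),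
      Function.Bijective (fun t : X ⟶ URep R N =>
        fun n : ℕ =>
          (LinearMap.proj (⟨n, le_refl n⟩ : {i : ℕ // n ≤ i})).comp
            ((t.app ((Paths.of AInfPlus).obj n)).hom : X.obj ((Paths.of AInfPlus).obj n) →ₗ[R]
              (URep R N).obj ((Paths.of AInfPlus).obj n)))) ∧
    (∀ N : ℕ → ModuleCat R, (∀ i, Module.Injective R (N i)) →
      CategoryTheory.Injective (URep R N)) ∧
    (∀ (N : ℕ → ModuleCat R) (X : Paths AInfPlus ⥤ ModuleCat R),
      (∀ i, Module.Injective R (N i)) →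
      (∀ n : ℕ, ∃ σ : X.obj ((Paths.of AInfPlus).obj n) →ₗ[R] N n, Function.Injective σ) →
      ∃ φ : X ⟶ URep R N, Mono φ) ∧
    (∀ X : Paths AInfPlus ⥤ ModuleCat R, CategoryTheory.Injective X →
      ∃ N : ℕ → ModuleCat R, (∀ i, Module.Injective R (N i)) ∧
        ∃ (i : X ⟶ URep R N) (r : URep R N ⟶ X), i ≫ r = 𝟙 X) := by
  refine ⟨fun N X => (URep.homEquiv N X).bijective, fun N => URep.injective N, ?_, ?_⟩
  · intro N X _ hσ
    choose σ hσ using hσ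
    exact ⟨URep.ofComponents N X σ, URep.mono_ofComponents N X σ hσ⟩
  · intro X _
    obtain ⟨N, hN, φ, _⟩ := URep.exists_mono X
    exact ⟨N, hN, φ, Injective.factorThru (𝟙 X) φ, Injective.comp_factorThru (𝟙 X) φ⟩
end
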